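/- arXiv:1801.04793 — 2 statements merged into one kernel-verified Lean document; each statement's English description precedes it below -/
import Mathlib

section
/- Let x ∈ ℝ^n with |x| ≥ 1 and let |y| ≤ |x|/2. Then the Taylor remainder R(x,y) = ∫_{|x|^2}^{|x+y|^2} (1+ρ)^{−q/2−2}(|x+y|^2 − ρ) dρ satisfies |R(x,y)| ≤ 2^{q+2}·25·⟨x⟩^{−q−4}|x|^2|y|^2 for any q > 0. -/
open MeasureTheory

/-! On the range of integration `1 + ρ ≥ (1 + ‖x‖²)/4`, because `‖x + y‖ ≥ ‖x‖/2`, so the weight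
`(1 + ρ)^(-q/2-2)` is at most `2^(q+4) ⟨x⟩^(-q-4)`, while `|‖x + y‖² - ρ| ≤ |‖x + y‖² - ‖x‖²|
≤ (5/2) ‖x‖ ‖y‖`. Bounding the integrand by a constant over an interval of that length gives the
claim. -/

theorem abs_integral_mul_sub_le {f : ℝ → ℝ} {a b C : ℝ} (hC : 0 ≤ C)
    (hf : ∀ ρ ∈ Set.uIoc a b, |f ρ| ≤ C) :
    |∫ ρ in a..b, f ρ * (b - ρ)| ≤ C * |b - a| ^ 2 := by
  have h : ∀ ρ ∈ Set.uIoc a b, ‖f ρ * (b - ρ)‖ ≤ C * |b - a| := fun ρ hρ => by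
    rw [norm_mul, Real.norm_eq_abs, Real.norm_eq_abs]
    exact mul_le_mul (hf ρ hρ) (Set.abs_sub_right_of_mem_uIcc (Set.uIoc_subset_uIcc hρ))
      (abs_nonneg _) hC
  simpa [sq, mul_assoc] using intervalIntegral.norm_integral_le_of_norm_le_const h

theorem abs_one_add_rpow_le_of_mem_uIoc {a b L s ρ : ℝ} (hL : 0 < L) (ha : L ≤ 1 + a)
    (hb : L ≤ 1 + b) (hs : s ≤ 0) (hρ : ρ ∈ Set.uIoc a b) : |(1 + ρ) ^ s| ≤ L ^ s := by
  have hmin : L - 1 ≤ min a b := le_min (by linarith) (by linarith)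
  have hLρ : L ≤ 1 + ρ := by linarith [hρ.1]
  rw [abs_of_pos (Real.rpow_pos_of_pos (hL.trans_le hLρ) s)]
  exact Real.rpow_le_rpow_of_nonpos hL hLρ hs

section

variable {E : Type*} [SeminormedAddCommGroup E]

theorem abs_norm_add_sq_sub_norm_sq_le (x y : E) :
    |‖x + y‖ ^ 2 - ‖x‖ ^ 2| ≤ ‖y‖ * (2 * ‖x‖ + ‖y‖) := by
  have hdiff : |‖x + y‖ - ‖x‖| ≤ ‖y‖ := by simpa using abs_norm_sub_norm_le (x + y) x
  have hsum : ‖x + y‖ + ‖x‖ ≤ 2 * ‖x‖ + ‖y‖ := by linarith [norm_add_le x y]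
  rw [sq_sub_sq, abs_mul, abs_of_nonneg (by positivity : 0 ≤ ‖x + y‖ + ‖x‖), mul_comm]
  exact mul_le_mul hdiff hsum (by positivity) (norm_nonneg y)

theorem norm_div_two_le_norm_add {x y : E} (hy : ‖y‖ ≤ ‖x‖ / 2) : ‖x‖ / 2 ≤ ‖x + y‖ := by
  have := norm_sub_le (x + y) y
  rw [add_sub_cancel_right] at this
  linarith

end

theorem div_four_rpow {u : ℝ} (hu : 0 ≤ u) (s : ℝ) : (u / 4) ^ s = 2 ^ (-2 * s) * u ^ s := by
  rw [Real.div_rpow hu (by norm_num), neg_mul, Real.rpow_neg (by norm_num),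
    Real.rpow_mul (by norm_num)]
  norm_num
  ring

theorem taylor_remainder_far_bound_general (n : ℕ) (q : ℝ) (hq : 0 < q)
    (x y : EuclideanSpace ℝ (Fin n)) (hy : ‖y‖ ≤ ‖x‖ / 2) :
    |∫ ρ in (‖x‖ ^ 2)..(‖x + y‖ ^ 2), (1 + ρ) ^ (-q/2 - 2) * (‖x + y‖ ^ 2 - ρ)| ≤
      (2:ℝ) ^ (q + 2) * 25 * (1 + ‖x‖ ^ 2) ^ ((-q - 4)/2) * ‖x‖ ^ 2 * ‖y‖ ^ 2 := by
  set s := (-q - 4) / 2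
  have hs : -q/2 - 2 = s := by ring
  set L := (1 + ‖x‖ ^ 2) / 4 with hL
  have hLa : L ≤ 1 + ‖x‖ ^ 2 := by linarith [hL, sq_nonneg ‖x‖]
  have hLb : L ≤ 1 + ‖x + y‖ ^ 2 := by
    have := pow_le_pow_left₀ (by positivity) (norm_div_two_le_norm_add hy) 2
    linarith [hL]
  have hdiff : |‖x + y‖ ^ 2 - ‖x‖ ^ 2| ≤ 5 / 2 * (‖x‖ * ‖y‖) := by
    have := abs_norm_add_sq_sub_norm_sq_le x y
    nlinarith [norm_nonneg y]
  rw [hs]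
  calc _ ≤ L ^ s * |‖x + y‖ ^ 2 - ‖x‖ ^ 2| ^ 2 :=
        abs_integral_mul_sub_le (by positivity)
          fun ρ => abs_one_add_rpow_le_of_mem_uIoc (by positivity) hLa hLb (by linarith)
    _ ≤ L ^ s * (5 / 2 * (‖x‖ * ‖y‖)) ^ 2 := by gcongr
    _ = _ := by
        rw [div_four_rpow (by positivity), show -2 * s = q + 2 + 2 by ring,
          Real.rpow_add two_pos]
        ring

theorem taylor_remainder_far_bound (n : ℕ) (q : ℝ) (hq : 0 < q)
    (x y : EuclideanSpace ℝ (Fin n)) (hx : 1 ≤ ‖x‖) (hy : ‖y‖ ≤ ‖x‖ / 2) :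
    |∫ ρ in (‖x‖ ^ 2)..(‖x + y‖ ^ 2), (1 + ρ) ^ (-q/2 - 2) * (‖x + y‖ ^ 2 - ρ)| ≤
      (2:ℝ) ^ (q + 2) * 25 * (1 + ‖x‖ ^ 2) ^ ((-q - 4)/2) * ‖x‖ ^ 2 * ‖y‖ ^ 2 :=
  taylor_remainder_far_bound_general n q hq x y hy
end

section
/- Let q > n > 0 and x ∈ ℝ^n with |x| ≥ 1. Then ∫_{|x|/2 ≤ |y| ≤ 2|x|} ⟨x+y⟩^{−q} |y|^{−n−1} dy ≤ 2^{q/2+n+1} ω_n (q−n)^{−1} |x|^{−n−1}. -/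
/-!
On the annulus `‖y‖ ≥ ‖x‖ / 2`, hence `‖y‖ ^ (-n-1) ≤ 2 ^ (n+1) * ‖x‖ ^ (-n-1)`, while
`⟨x + y⟩ ^ (-q) ≤ 2 ^ (q/2) * (1 + ‖x + y‖) ^ (-q)`. Dropping the restriction to the annulus and
translating leaves `∫ (1 + ‖z‖) ^ (-q)`, which polar coordinates turn into
`ω_n ∫₀^∞ r ^ (n-1) (1 + r) ^ (-q) dr ≤ ω_n ∫₀^∞ (1 + r) ^ (n-1-q) dr = ω_n / (q - n)`,
with `ω_n = n * vol (ball 0 1)`.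
-/

open MeasureTheory Set Module

theorem integrableOn_Ioi_one_add_rpow {p : ℝ} (hp : p < -1) :
    IntegrableOn (fun r : ℝ ↦ (1 + r) ^ p) (Ioi 0) := by
  have h := (measurePreserving_add_left (volume : Measure ℝ) 1).integrableOn_comp_preimage
    (measurableEmbedding_addLeft 1) (f := fun t ↦ t ^ p) (s := Ioi 1)
  rw [preimage_const_add_Ioi, sub_self] at h
  exact h.mpr (integrableOn_Ioi_rpow_of_lt hp one_pos)

theorem integral_Ioi_one_add_rpow {p : ℝ} (hp : p < -1) :
    ∫ r in Ioi (0 : ℝ), (1 + r) ^ p = -(p + 1)⁻¹ := by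
  have h := (measurePreserving_add_left (volume : Measure ℝ) 1).setIntegral_preimage_emb
    (measurableEmbedding_addLeft 1) (fun t ↦ t ^ p) (Ioi 1)
  rw [preimage_const_add_Ioi, sub_self] at h
  rw [h, integral_Ioi_rpow_of_lt hp one_pos, Real.one_rpow, neg_div, one_div]

theorem integral_Ioi_pow_mul_one_add_rpow_neg_le (k : ℕ) {q : ℝ} (hq : (k : ℝ) + 1 < q) :
    ∫ r in Ioi (0 : ℝ), r ^ k * (1 + r) ^ (-q) ≤ (q - (k + 1))⁻¹ := by
  have hp : (k : ℝ) - q < -1 := by linarith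
  calc ∫ r in Ioi (0 : ℝ), r ^ k * (1 + r) ^ (-q)
      ≤ ∫ r in Ioi (0 : ℝ), (1 + r) ^ ((k : ℝ) - q) := by
        refine integral_mono_of_nonneg ?_ (integrableOn_Ioi_one_add_rpow hp) ?_
        all_goals filter_upwards [ae_restrict_mem measurableSet_Ioi] with r (hr : 0 < r)
        · positivity
        · rw [sub_eq_add_neg, Real.rpow_add (by positivity), Real.rpow_natCast]
          gcongr
          linarith
    _ = (q - (k + 1))⁻¹ := by
        rw [integral_Ioi_one_add_rpow hp, ← inv_neg]
        ring_nf

theorem integral_one_add_norm_rpow_neg_le {E : Type*} [NormedAddCommGroup E]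
    [NormedSpace ℝ E] [FiniteDimensional ℝ E] [MeasurableSpace E] [BorelSpace E]
    [Nontrivial E] (μ : Measure E) [μ.IsAddHaarMeasure] {q : ℝ}
    (hq : (finrank ℝ E : ℝ) < q) :
    ∫ z, (1 + ‖z‖) ^ (-q) ∂μ ≤
      finrank ℝ E * μ.real (Metric.ball 0 1) * (q - finrank ℝ E)⁻¹ := by
  have hk : ((finrank ℝ E - 1 : ℕ) : ℝ) + 1 = finrank ℝ E := by
    rw [Nat.cast_sub finrank_pos, Nat.cast_one, sub_add_cancel]
  rw [integral_fun_norm_addHaar μ (fun r ↦ (1 + r) ^ (-q)), nsmul_eq_mul, smul_eq_mul,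
    mul_assoc]
  gcongr
  simpa only [smul_eq_mul, hk] using
    integral_Ioi_pow_mul_one_add_rpow_neg_le (finrank ℝ E - 1) (hk ▸ hq)

theorem Real.rpow_le_two_rpow_neg_mul_of_half_le {a b e : ℝ} (ha : 0 < a) (hab : a / 2 ≤ b)
    (he : e ≤ 0) : b ^ e ≤ 2 ^ (-e) * a ^ e :=
  calc b ^ e ≤ (a / 2) ^ e := Real.rpow_le_rpow_of_nonpos (by positivity) hab he
    _ = 2 ^ (-e) * a ^ e := by
      rw [Real.div_rpow ha.le zero_le_two, div_eq_mul_inv, ← Real.rpow_neg zero_le_two,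
        mul_comm]

theorem one_add_norm_sq_rpow_mul_rpow_le_of_half_le {E : Type*} [NormedAddCommGroup E]
    {x y : E} {q e : ℝ} (hq : 0 < q) (he : e ≤ 0) (hx : 0 < ‖x‖) (hy : ‖x‖ / 2 ≤ ‖y‖) :
    (1 + ‖x + y‖ ^ 2) ^ (-q / 2) * ‖y‖ ^ e ≤ 2 ^ (q / 2 - e) * ‖x‖ ^ e * (1 + ‖x + y‖) ^ (-q) :=
  calc (1 + ‖x + y‖ ^ 2) ^ (-q / 2) * ‖y‖ ^ e
      ≤ (2 ^ (q / 2) * (1 + ‖x + y‖) ^ (-q)) * (2 ^ (-e) * ‖x‖ ^ e) := by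
        gcongr ?_ * ?_
        · exact rpow_neg_one_add_norm_sq_le (x + y) hq
        · exact Real.rpow_le_two_rpow_neg_mul_of_half_le hx hy he
    _ = 2 ^ (q / 2 - e) * ‖x‖ ^ e * (1 + ‖x + y‖) ^ (-q) := by
        rw [sub_eq_add_neg, Real.rpow_add two_pos]
        ring

theorem middle_region_bound (n : ℕ) (hn : 0 < n) (q : ℝ) (hq : (n:ℝ) < q)
    (x : EuclideanSpace ℝ (Fin n)) (hx : 1 ≤ ‖x‖) :
    ∫ y in {y : EuclideanSpace ℝ (Fin n) | ‖x‖ / 2 ≤ ‖y‖ ∧ ‖y‖ ≤ 2 * ‖x‖},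
        (1 + ‖x + y‖ ^ 2) ^ (-q/2) * ‖y‖ ^ (-(n:ℝ) - 1) ≤
      (2:ℝ) ^ (q/2 + n + 1) *
        (n * (volume (Metric.ball (0 : EuclideanSpace ℝ (Fin n)) 1)).toReal) *
        (q - (n:ℝ))⁻¹ * ‖x‖ ^ (-(n:ℝ) - 1) := by
  have : Nonempty (Fin n) := Fin.pos_iff_nonempty.mp hn
  set e : ℝ := -(n : ℝ) - 1
  set C : ℝ := 2 ^ (q / 2 - e) * ‖x‖ ^ e
  have hbracket : Integrable fun y : EuclideanSpace ℝ (Fin n) ↦ C * (1 + ‖x + y‖) ^ (-q) :=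
    ((integrable_one_add_norm (by rwa [finrank_euclideanSpace_fin])).comp_add_left x).const_mul C
  calc _ ≤ ∫ y in {y : EuclideanSpace ℝ (Fin n) | ‖x‖ / 2 ≤ ‖y‖ ∧ ‖y‖ ≤ 2 * ‖x‖},
          C * (1 + ‖x + y‖) ^ (-q) :=
        integral_mono_of_nonneg (.of_forall fun y ↦ by positivity) hbracket.integrableOn
          (ae_restrict_of_forall_mem (by measurability) fun y hy ↦
            one_add_norm_sq_rpow_mul_rpow_le_of_half_le (by linarith) (by linarith)
              (by linarith) hy.1)
    _ ≤ ∫ y, C * (1 + ‖x + y‖) ^ (-q) :=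
        setIntegral_le_integral hbracket (.of_forall fun y ↦ by positivity)
    _ = C * ∫ z : EuclideanSpace ℝ (Fin n), (1 + ‖z‖) ^ (-q) := by
        rw [integral_const_mul, integral_add_left_eq_self x (f := fun z ↦ (1 + ‖z‖) ^ (-q))]
    _ ≤ C * (n * volume.real (Metric.ball (0 : EuclideanSpace ℝ (Fin n)) 1) * (q - n)⁻¹) := by
        gcongr
        simpa only [finrank_euclideanSpace_fin] using
          integral_one_add_norm_rpow_neg_le (volume : Measure (EuclideanSpace ℝ (Fin n)))
            (q := q) (by rwa [finrank_euclideanSpace_fin])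
    _ = _ := by
        rw [measureReal_def, show q / 2 + n + 1 = q / 2 - e by ring]
        ring
end
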